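/- arXiv:2105.06697 — 3 statements merged into one kernel-verified Lean document; each statement's English description precedes it below -/
import Mathlib

section
/- Let Q_l : ℝ^d → ℝ^d select the l coordinates of x with largest magnitude (keeping them, setting the rest to zero), with 1 ≤ l ≤ d. Then ‖Q_l(x) − x‖² ≤ (1 − l/d)·‖x‖² for all x ∈ ℝ^d, where ‖·‖ is the Euclidean norm. -/
/-- top-l sparsification. If S is a set of l coordinates whose magnitudes
dominate all remaining ones, and Q_l(x) keeps the coordinates in S and zeroes the rest,
then ‖Q_l(x) - x‖² ≤ (1 - l/d)·‖x‖². -/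
theorem stmt11 {d : ℕ} (l : ℕ) (hl1 : 1 ≤ l) (hld : l ≤ d)
    (x : Fin d → ℝ) (S : Finset (Fin d)) (hcard : S.card = l)
    (htop : ∀ i ∈ S, ∀ j ∉ S, |x j| ≤ |x i|) :
    ∑ i, ((if i ∈ S then x i else 0) - x i) ^ 2 ≤
      (1 - (l : ℝ) / d) * ∑ i, (x i) ^ 2 := by
  have hd : (0:ℝ) < d := by
    have : 1 ≤ d := le_trans hl1 hld
    exact_mod_cast Nat.lt_of_lt_of_le Nat.zero_lt_one this
  set A := ∑ j ∈ Sᶜ, (x j)^2 with hA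
  set B := ∑ i ∈ S, (x i)^2 with hB
  have hcardc : (Sᶜ.card : ℝ) = (d:ℝ) - l := by
    have : Sᶜ.card = d - l := by
      rw [Finset.card_compl, hcard]
      simp [Fintype.card_fin]
    rw [this, Nat.cast_sub hld]
  have key : (l:ℝ) * A ≤ ((d:ℝ) - l) * B := by
    have h1 : ∀ i ∈ S, A ≤ ((d:ℝ) - l) * (x i)^2 := by
      intro i hi
      have h2 : A ≤ ∑ _j ∈ Sᶜ, (x i)^2 := by
        apply Finset.sum_le_sum
        intro j hj
        have h3 := htop i hi j (Finset.mem_compl.mp hj)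
        nlinarith [abs_nonneg (x j), sq_abs (x j), sq_abs (x i)]
      simpa [Finset.sum_const, hcardc, nsmul_eq_mul] using h2
    have h4 : ∑ _i ∈ S, A ≤ ∑ i ∈ S, ((d:ℝ) - l) * (x i)^2 :=
      Finset.sum_le_sum h1
    rw [Finset.sum_const, hcard, nsmul_eq_mul, ← Finset.mul_sum] at h4
    exact h4
  have hL : ∑ i, ((if i ∈ S then x i else 0) - x i) ^ 2 = A := by
    rw [← Finset.sum_add_sum_compl S]
    have h5 : ∑ i ∈ S, ((if i ∈ S then x i else 0) - x i) ^ 2 = 0 := by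
      apply Finset.sum_eq_zero
      intro i hi
      simp [hi]
    have h6 : ∑ i ∈ Sᶜ, ((if i ∈ S then x i else 0) - x i) ^ 2 = A := by
      apply Finset.sum_congr rfl
      intro i hi
      have : i ∉ S := Finset.mem_compl.mp hi
      simp [this]
    rw [h5, h6, zero_add]
  have hR : ∑ i, (x i)^2 = B + A := by
    rw [← Finset.sum_add_sum_compl S]
  rw [hL, hR]
  have h7 : (1 - (l:ℝ)/d) * (B+A) = ((d:ℝ)-l)*(B+A)/d := by
    field_simp
  rw [h7, le_div_iff₀ hd]
  nlinarith [key]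
end

section
/- Let γ ∈ (0, (1−λₙ(W))⁻¹) where W satisfies the standard assumptions (symmetric, null(I−W)=span(𝟏ₙ), −I ≺ W ⪯ I) and λₙ(W) is its smallest eigenvalue. Let δ ∈ [0,1) and q = δ(1+γ(1−λₙ(W)))/(1−γ(1−λₙ(W))). Then the matrix γ(W−I)·(qI − δI + (q+δ)γ(W−I)) is negative semidefinite. -/
/-!
With `B = 1 - W`, the choice of `q` is exactly `q - δ = (q + δ) γ (1 - λₙ)`, so the matrix equals
`γ² (q + δ) • B ((1 - λₙ) • 1 - B)`. The assumptions on `W` and `λₙ` say `0 ≤ B ≤ (1 - λₙ) • 1` in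
the Loewner order, and a product of commuting positive semidefinite matrices is positive
semidefinite.
-/

open Matrix

section

variable {A : Type*} [Ring A] [PartialOrder A] [StarRing A] [StarOrderedRing A]
  [TopologicalSpace A] [Algebra ℝ A] [ContinuousFunctionalCalculus ℝ A IsSelfAdjoint]
  [NonnegSpectrumClass ℝ A]

theorem mul_smul_one_sub_nonneg {a : A} {c : ℝ} (ha : 0 ≤ a) (hac : a ≤ c • 1) :
    0 ≤ a * (c • 1 - a) :=
  Commute.mul_nonneg ha (sub_nonneg.mpr hac) <|
    ((Commute.one_right a).smul_right c).sub_right (Commute.refl a)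

end

open scoped MatrixOrder

theorem Matrix.le_of_dotProduct_mulVec_le {n : Type*} [Fintype n] {A C : Matrix n n ℝ}
    (hA : A.IsSymm) (hC : C.IsSymm)
    (h : ∀ x, x ⬝ᵥ A *ᵥ x ≤ x ⬝ᵥ C *ᵥ x) : A ≤ C :=
  PosSemidef.of_dotProduct_mulVec_nonneg
    ((isHermitian_iff_isSymm.mpr hC).sub (isHermitian_iff_isSymm.mpr hA)) fun x => by
      simpa [sub_mulVec, dotProduct_sub] using h x

theorem stmt16_general {n : ℕ} (W : Matrix (Fin n) (Fin n) ℝ)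
    (hsym : W.IsSymm)
    (hle : ∀ x : Fin n → ℝ, x ⬝ᵥ W.mulVec x ≤ x ⬝ᵥ x)
    (lamn : ℝ)
    (hlamn : IsGreatest {r : ℝ | ∀ x : Fin n → ℝ, r * (x ⬝ᵥ x) ≤ x ⬝ᵥ W.mulVec x} lamn)
    (γ δ q : ℝ) (hγ0 : 0 < γ) (hγ1 : γ < (1 - lamn)⁻¹) (hδ0 : 0 ≤ δ)
    (hq : q = δ * (1 + γ * (1 - lamn)) / (1 - γ * (1 - lamn))) :
    (-(γ • ((W - 1) * ((q - δ) • (1 : Matrix (Fin n) (Fin n) ℝ) +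
      ((q + δ) * γ) • (W - 1))))).PosSemidef := by
  have hgap : 0 < 1 - lamn := inv_pos.mp (hγ0.trans hγ1)
  have hγgap : γ * (1 - lamn) < 1 := (lt_div_iff₀ hgap).mp (by rwa [one_div])
  have hq_sub : q - δ = (q + δ) * γ * (1 - lamn) := by
    rw [hq]; field_simp [(sub_pos.mpr hγgap).ne']; ring
  have hq_add : 0 ≤ q + δ := by rw [hq]; positivity
  have hB : 0 ≤ 1 - W :=
    sub_nonneg.mpr (le_of_dotProduct_mulVec_le hsym isSymm_one (by simpa using hle))
  have hBc : 1 - W ≤ (1 - lamn) • (1 : Matrix (Fin n) (Fin n) ℝ) :=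
    le_of_dotProduct_mulVec_le (isSymm_one.sub hsym) (isSymm_one.smul _) fun x => by
      have hx := hlamn.1 x
      simp only [sub_mulVec, one_mulVec, smul_mulVec, dotProduct_sub, dotProduct_smul, smul_eq_mul]
      linarith
  have hfactor : -(γ • ((W - 1) * ((q - δ) • (1 : Matrix (Fin n) (Fin n) ℝ) +
      ((q + δ) * γ) • (W - 1)))) =
      (γ * ((q + δ) * γ)) • ((1 - W) * ((1 - lamn) • 1 - (1 - W))) := by
    rw [hq_sub]
    simp only [Matrix.mul_sub, Matrix.mul_add, Matrix.sub_mul, Matrix.mul_smul, Matrix.mul_one,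
      Matrix.one_mul]
    module
  rw [hfactor]
  exact (nonneg_iff_posSemidef.mp (mul_smul_one_sub_nonneg hB hBc)).smul (by positivity)

/-- with γ ∈ (0, (1-λₙ(W))⁻¹), δ ∈ [0,1), and
q = δ(1+γ(1-λₙ))/(1-γ(1-λₙ)), the matrix γ(W-I)(qI - δI + (q+δ)γ(W-I)) is
negative semidefinite. λₙ(W) is the smallest eigenvalue, characterized as the greatest
uniform Rayleigh lower bound. -/
theorem stmt16 {n : ℕ} (W : Matrix (Fin n) (Fin n) ℝ)
    (hsym : W.IsSymm)
    (hnull : ∀ x : Fin n → ℝ, (1 - W).mulVec x = 0 ↔ ∃ c : ℝ, x = fun _ => c)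
    (hlt : ∀ x : Fin n → ℝ, x ≠ 0 → -(x ⬝ᵥ x) < x ⬝ᵥ W.mulVec x)
    (hle : ∀ x : Fin n → ℝ, x ⬝ᵥ W.mulVec x ≤ x ⬝ᵥ x)
    (lamn : ℝ)
    (hlamn : IsGreatest {r : ℝ | ∀ x : Fin n → ℝ, r * (x ⬝ᵥ x) ≤ x ⬝ᵥ W.mulVec x} lamn)
    (γ δ q : ℝ) (hγ0 : 0 < γ) (hγ1 : γ < (1 - lamn)⁻¹) (hδ0 : 0 ≤ δ) (hδ1 : δ < 1)
    (hq : q = δ * (1 + γ * (1 - lamn)) / (1 - γ * (1 - lamn))) :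
    (-(γ • ((W - 1) * ((q - δ) • (1 : Matrix (Fin n) (Fin n) ℝ) +
      ((q + δ) * γ) • (W - 1))))).PosSemidef :=
  stmt16_general W hsym hle lamn hlamn γ δ q hγ0 hγ1 hδ0 hq
end

section
/- Let δ ∈ [0,1), λₙ < 1, and γ = (1−δ)/((3+δ)(1−λₙ)). Then max{1 − 2γ(1−λ₂)/(1+γ(1−λₙ)), δ(1+γ(1−λₙ))/(1−γ(1−λₙ))} = 1 − (1−δ)(1−λ₂)/(2(1−λₙ)) for any λ₂ with λₙ ≤ λ₂ < 1. -/
/-- with γ = (1-δ)/((3+δ)(1-λₙ)),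
max{1 - 2γ(1-λ₂)/(1+γ(1-λₙ)), δ(1+γ(1-λₙ))/(1-γ(1-λₙ))}
  = 1 - (1-δ)(1-λ₂)/(2(1-λₙ)). -/
theorem stmt18 (δ lam2 lamn : ℝ) (hδ0 : 0 ≤ δ) (hδ1 : δ < 1)
    (h1 : -1 < lamn) (h2 : lamn ≤ lam2) (h3 : lam2 < 1)
    (γ : ℝ) (hγ : γ = (1 - δ) / ((3 + δ) * (1 - lamn))) :
    max (1 - 2 * γ * (1 - lam2) / (1 + γ * (1 - lamn)))
        (δ * (1 + γ * (1 - lamn)) / (1 - γ * (1 - lamn)))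
      = 1 - (1 - δ) * (1 - lam2) / (2 * (1 - lamn)) := by
  have hA : (0:ℝ) < 1 - lamn := by linarith
  have hB : (0:ℝ) < 3 + δ := by linarith
  have ha : γ * (1 - lamn) = (1 - δ) / (3 + δ) := by
    rw [hγ]; field_simp
  have h1a : 1 + γ * (1 - lamn) = 4 / (3 + δ) := by
    rw [ha]; field_simp; ring
  have h2a : 1 - γ * (1 - lamn) = (2 + 2 * δ) / (3 + δ) := by
    rw [ha]; field_simp; ring
  have hδp : (0:ℝ) < 1 + δ := by linarith
  have hfirst : 1 - 2 * γ * (1 - lam2) / (1 + γ * (1 - lamn))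
      = 1 - (1 - δ) * (1 - lam2) / (2 * (1 - lamn)) := by
    rw [h1a, hγ]; field_simp; ring
  have hsecond : δ * (1 + γ * (1 - lamn)) / (1 - γ * (1 - lamn))
      = 2 * δ / (1 + δ) := by
    rw [h1a, h2a]; field_simp; ring
  rw [hfirst, hsecond, max_eq_left]
  rw [div_le_iff₀ hδp]
  have ht : (1 - δ) * (1 - lam2) / (2 * (1 - lamn)) * (1 + δ) ≤ 1 - δ := by
    rw [div_mul_eq_mul_div, div_le_iff₀ (by positivity : (0:ℝ) < 2 * (1 - lamn))]
    nlinarith [mul_nonneg (sub_nonneg.mpr hδ1.le) (show (0:ℝ) ≤ (1 - lamn) * 2 - (1 - lam2) * (1 + δ) by nlinarith)]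
  nlinarith [ht]
end
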